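/- Isomorphism classes of central extensions of a 3-LieDer pair (L, φ_L) by an abelian 3-LieDer pair (M, φ_M) are in bijection with the second cohomology group H²_{3-LieDer}(L, M) with trivial coefficients. -/

import Mathlib

/-- A 3-Lie algebra: a module with a trilinear skew-symmetric bracket satisfying
the fundamental (Filippov) identity. -/
structure ThreeLieAlgebra (K L : Type) [Field K] [AddCommGroup L] [Module K L] where
  br : L →ₗ[K] L →ₗ[K] L →ₗ[K] L
  skew₁₂ : ∀ x y z, br x y z = - br y x z
  skew₂₃ : ∀ x y z, br x y z = - br x z y
  fund : ∀ x y u v w,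
    br x y (br u v w) = br (br x y u) v w + br u (br x y v) w + br u v (br x y w)

/-- A derivation of a 3-Lie algebra. -/
def IsDer {K L : Type} [Field K] [AddCommGroup L] [Module K L]
    (A : ThreeLieAlgebra K L) (φ : L →ₗ[K] L) : Prop :=
  ∀ x y z, φ (A.br x y z) = A.br (φ x) y z + A.br x (φ y) z + A.br x y (φ z)

/-- A central extension of a 3-LieDer pair `(L, φL)` by an abelian 3-LieDer pair
`(M, φM)` (trivial bracket on `M`). -/
structure CentExt (K L M : Type) [Field K] [AddCommGroup L] [Module K L]
    [AddCommGroup M] [Module K M]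
    (A : ThreeLieAlgebra K L) (φL : L →ₗ[K] L) (φM : M →ₗ[K] M) where
  E : Type
  [grp : AddCommGroup E]
  [mod : Module K E]
  str : ThreeLieAlgebra K E
  φE : E →ₗ[K] E
  der : IsDer str φE
  i : M →ₗ[K] E
  p : E →ₗ[K] L
  inj : Function.Injective i
  surj : Function.Surjective p
  exact : LinearMap.range i = LinearMap.ker p
  morph : ∀ a b c, p (str.br a b c) = A.br (p a) (p b) (p c)
  central : ∀ (m : M) (a b : E), str.br (i m) a b = 0
  compat_p : ∀ e, p (φE e) = φL (p e)
  compat_i : ∀ m, φE (i m) = i (φM m)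

attribute [instance] CentExt.grp CentExt.mod

/-- Isomorphism of central extensions of 3-LieDer pairs. -/
def ExtIso {K L M : Type} [Field K] [AddCommGroup L] [Module K L]
    [AddCommGroup M] [Module K M]
    {A : ThreeLieAlgebra K L} {φL : L →ₗ[K] L} {φM : M →ₗ[K] M}
    (c c' : CentExt K L M A φL φM) : Prop :=
  ∃ η : c.E ≃ₗ[K] c'.E,
    (∀ a b d, η (c.str.br a b d) = c'.str.br (η a) (η b) (η d)) ∧
    (∀ e, η (c.φE e) = c'.φE (η e)) ∧
    (∀ m, η (c.i m) = c'.i m) ∧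
    (∀ e, c'.p (η e) = c.p e)

/-- 2-cocycles of the 3-LieDer pair `(L, φL)` with trivial coefficients in `M`. -/
def IsTwoCocycle {K L M : Type} [Field K] [AddCommGroup L] [Module K L]
    [AddCommGroup M] [Module K M]
    (A : ThreeLieAlgebra K L) (φL : L →ₗ[K] L) (φM : M →ₗ[K] M)
    (pc : (L →ₗ[K] L →ₗ[K] L →ₗ[K] M) × (L →ₗ[K] M)) : Prop :=
  (∀ x y z, pc.1 x y z = - pc.1 y x z) ∧
  (∀ x y z, pc.1 x y z = - pc.1 x z y) ∧
  (∀ x y z v w, pc.1 x y (A.br z v w)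
      = pc.1 (A.br x y z) v w + pc.1 z (A.br x y v) w + pc.1 z v (A.br x y w)) ∧
  (∀ x y z, φM (pc.1 x y z) + pc.2 (A.br x y z)
      = pc.1 (φL x) y z + pc.1 x (φL y) z + pc.1 x y (φL z))

/-- Two 2-cocycles are cohomologous iff they differ by the coboundary `∂u` of a
linear map `u : L → M`. -/
def CohomRel {K L M : Type} [Field K] [AddCommGroup L] [Module K L]
    [AddCommGroup M] [Module K M]
    (A : ThreeLieAlgebra K L) (φL : L →ₗ[K] L) (φM : M →ₗ[K] M)
    (a b : {pc : (L →ₗ[K] L →ₗ[K] L →ₗ[K] M) × (L →ₗ[K] M) //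
      IsTwoCocycle A φL φM pc}) : Prop :=
  ∃ u : L →ₗ[K] M,
    (∀ x y z, a.1.1 x y z - b.1.1 x y z = - u (A.br x y z)) ∧
    (∀ x, a.1.2 x - b.1.2 x = φM (u x) - u (φL x))

/-!
A linear section `s` of `p : L̂ → L` identifies `L̂` with `M × L`, on which the bracket and the
derivation become `[(m, x), (n, y), (k, z)] = (ω x y z, [x, y, z])` and
`(m, x) ↦ (φM m + ψ x, φL x)`, where `i ∘ ω = [s·, s·, s·] - s[·, ·, ·]` and
`i ∘ ψ = φE ∘ s - s ∘ φL`. The 3-LieDer axioms for this twisted structure on `M × L` are exactly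
the cocycle conditions on `(ω, ψ)`, and an isomorphism between two twisted extensions is a shear
`(m, x) ↦ (m + u x, x)`, which changes `(ω, ψ)` by `∂u`.
-/

section Trilinear

variable {R U V W W' : Type} [CommSemiring R] [AddCommMonoid U] [Module R U]
    [AddCommMonoid V] [Module R V] [AddCommMonoid W] [Module R W] [AddCommMonoid W'] [Module R W']

def LinearMap.compTri (h : W →ₗ[R] W') (f : U →ₗ[R] U →ₗ[R] U →ₗ[R] W) (g : V →ₗ[R] U) :
    V →ₗ[R] V →ₗ[R] V →ₗ[R] W' :=
  (f.compl₁₂ g g).compr₂ (LinearMap.lcomp R W' g ∘ₗ LinearMap.llcomp R U W W' h)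

@[simp] lemma LinearMap.compTri_apply (h : W →ₗ[R] W') (f : U →ₗ[R] U →ₗ[R] U →ₗ[R] W)
    (g : V →ₗ[R] U) (x y z : V) : h.compTri f g x y z = h (f (g x) (g y) (g z)) := rfl

end Trilinear

namespace ThreeLieAlgebra

variable {K V E : Type} [Field K] [AddCommGroup V] [Module K V] [AddCommGroup E] [Module K E]

def ofIntertwining (T : ThreeLieAlgebra K E) (e : V ≃ₗ[K] E) (B : V →ₗ[K] V →ₗ[K] V →ₗ[K] V)
    (hB : ∀ x y z, e (B x y z) = T.br (e x) (e y) (e z)) : ThreeLieAlgebra K V where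
  br := B
  skew₁₂ x y z := e.injective (by rw [map_neg, hB, hB, T.skew₁₂ (e x)])
  skew₂₃ x y z := e.injective (by rw [map_neg, hB, hB, T.skew₂₃ (e x)])
  fund x y u v w := e.injective (by simp only [hB, map_add]; exact T.fund _ _ _ _ _)

lemma isDer_ofIntertwining (T : ThreeLieAlgebra K E) (e : V ≃ₗ[K] E)
    (B : V →ₗ[K] V →ₗ[K] V →ₗ[K] V) (hB : ∀ x y z, e (B x y z) = T.br (e x) (e y) (e z))
    {φ : E →ₗ[K] E} (hφ : IsDer T φ) {D : V →ₗ[K] V} (hD : ∀ x, e (D x) = φ (e x)) :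
    IsDer (T.ofIntertwining e B hB) D := fun x y z =>
  e.injective (by simp only [ofIntertwining, hB, hD, map_add, hφ (e x)])

end ThreeLieAlgebra

section Twisted

variable {K L M : Type} [Field K] [AddCommGroup L] [Module K L] [AddCommGroup M] [Module K M]
    (A : ThreeLieAlgebra K L) (φL : L →ₗ[K] L) (φM : M →ₗ[K] M)

def twistedBr (ω : L →ₗ[K] L →ₗ[K] L →ₗ[K] M) :
    (M × L) →ₗ[K] (M × L) →ₗ[K] (M × L) →ₗ[K] (M × L) :=
  (LinearMap.inl K M L).compTri ω (LinearMap.snd K M L)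
    + (LinearMap.inr K M L).compTri A.br (LinearMap.snd K M L)

@[simp] lemma twistedBr_apply (ω : L →ₗ[K] L →ₗ[K] L →ₗ[K] M) (a b d : M × L) :
    twistedBr A ω a b d = (ω a.2 b.2 d.2, A.br a.2 b.2 d.2) := by
  ext <;> simp [twistedBr]

def twistedDer (ψ : L →ₗ[K] M) : (M × L) →ₗ[K] (M × L) :=
  (φM ∘ₗ LinearMap.fst K M L + ψ ∘ₗ LinearMap.snd K M L).prod (φL ∘ₗ LinearMap.snd K M L)

@[simp] lemma twistedDer_apply (ψ : L →ₗ[K] M) (a : M × L) :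
    twistedDer φL φM ψ a = (φM a.1 + ψ a.2, φL a.2) := rfl

lemma isTwoCocycle_of_isDer_twistedDer {ω : L →ₗ[K] L →ₗ[K] L →ₗ[K] M} {ψ : L →ₗ[K] M}
    (T : ThreeLieAlgebra K (M × L)) (hT : T.br = twistedBr A ω)
    (hD : IsDer T (twistedDer φL φM ψ)) : IsTwoCocycle A φL φM (ω, ψ) := by
  refine ⟨fun x y z => ?_, fun x y z => ?_, fun x y z v w => ?_, fun x y z => ?_⟩
  · simpa [hT] using congrArg Prod.fst (T.skew₁₂ (0, x) (0, y) (0, z))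
  · simpa [hT] using congrArg Prod.fst (T.skew₂₃ (0, x) (0, y) (0, z))
  · simpa [hT] using congrArg Prod.fst (T.fund (0, x) (0, y) (0, z) (0, v) (0, w))
  · simpa [hT] using congrArg Prod.fst (hD (0, x) (0, y) (0, z))

variable {A φL φM}

def twistedAlgebra (a : {pc : (L →ₗ[K] L →ₗ[K] L →ₗ[K] M) × (L →ₗ[K] M) //
      IsTwoCocycle A φL φM pc}) : ThreeLieAlgebra K (M × L) where
  br := twistedBr A a.1.1
  skew₁₂ x y z := Prod.ext (by simpa using a.2.1 x.2 y.2 z.2) (by simpa using A.skew₁₂ x.2 y.2 z.2)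
  skew₂₃ x y z :=
    Prod.ext (by simpa using a.2.2.1 x.2 y.2 z.2) (by simpa using A.skew₂₃ x.2 y.2 z.2)
  fund x y u v w := Prod.ext (by simpa using a.2.2.2.1 x.2 y.2 u.2 v.2 w.2)
    (by simpa using A.fund x.2 y.2 u.2 v.2 w.2)

lemma isDer_twistedDer (hφL : IsDer A φL) (a : {pc : (L →ₗ[K] L →ₗ[K] L →ₗ[K] M) ×
      (L →ₗ[K] M) // IsTwoCocycle A φL φM pc}) :
    IsDer (twistedAlgebra a) (twistedDer φL φM a.1.2) := fun x y z =>
  Prod.ext (by simpa [twistedAlgebra] using a.2.2.2.2 x.2 y.2 z.2)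
    (by simpa [twistedAlgebra] using hφL x.2 y.2 z.2)

def CentExt.ofCocycle (hφL : IsDer A φL) (a : {pc : (L →ₗ[K] L →ₗ[K] L →ₗ[K] M) ×
      (L →ₗ[K] M) // IsTwoCocycle A φL φM pc}) : CentExt K L M A φL φM where
  E := M × L
  str := twistedAlgebra a
  φE := twistedDer φL φM a.1.2
  der := isDer_twistedDer hφL a
  i := LinearMap.inl K M L
  p := LinearMap.snd K M L
  inj := LinearMap.inl_injective
  surj := Prod.snd_surjective
  exact := LinearMap.range_inl K M L
  morph _ _ _ := by simp [twistedAlgebra]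
  central _ _ _ := by simp [twistedAlgebra]
  compat_p _ := rfl
  compat_i _ := by simp

end Twisted

namespace CentExt

variable {K L M : Type} [Field K] [AddCommGroup L] [Module K L] [AddCommGroup M] [Module K M]
    {A : ThreeLieAlgebra K L} {φL : L →ₗ[K] L} {φM : M →ₗ[K] M} (c : CentExt K L M A φL φM)

noncomputable def sec : L →ₗ[K] c.E :=
  (LinearMap.exists_rightInverse_of_surjective c.p (LinearMap.range_eq_top.2 c.surj)).choose

@[simp] lemma p_sec (x : L) : c.p (c.sec x) = x :=
  LinearMap.congr_fun (LinearMap.exists_rightInverse_of_surjective c.p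
    (LinearMap.range_eq_top.2 c.surj)).choose_spec x

@[simp] lemma p_i (m : M) : c.p (c.i m) = 0 :=
  LinearMap.mem_ker.1 (c.exact ▸ LinearMap.mem_range_self c.i m)

noncomputable def retr : c.E →ₗ[K] M :=
  (LinearMap.exists_leftInverse_of_injective c.i (LinearMap.ker_eq_bot.2 c.inj)).choose ∘ₗ
    (LinearMap.id - c.sec ∘ₗ c.p)

lemma i_retr (e : c.E) : c.i (c.retr e) = e - c.sec (c.p e) := by
  obtain ⟨m, hm⟩ : e - c.sec (c.p e) ∈ LinearMap.range c.i := by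
    rw [c.exact, LinearMap.mem_ker, map_sub, p_sec, sub_self]
  have hleft := (LinearMap.exists_leftInverse_of_injective c.i
    (LinearMap.ker_eq_bot.2 c.inj)).choose_spec
  have : c.retr e = m := by
    simp only [retr, LinearMap.comp_apply, LinearMap.sub_apply, LinearMap.id_apply, ← hm]
    exact LinearMap.congr_fun hleft m
  rw [this, hm]

@[simp] lemma br_i_left (m : M) (a b : c.E) : c.str.br (c.i m) a b = 0 := c.central m a b

@[simp] lemma br_i_mid (a : c.E) (m : M) (b : c.E) : c.str.br a (c.i m) b = 0 := by
  rw [c.str.skew₁₂, c.central, neg_zero]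

@[simp] lemma br_i_right (a b : c.E) (m : M) : c.str.br a b (c.i m) = 0 := by
  rw [c.str.skew₂₃, br_i_mid, neg_zero]

noncomputable def splitEquiv : (M × L) ≃ₗ[K] c.E :=
  LinearEquiv.ofLinearMap (c.i.coprod c.sec) (c.retr.prod c.p)
    (LinearMap.ext fun e => by simp [i_retr])
    (LinearMap.ext fun a => Prod.ext (c.inj (by simp [i_retr])) (by simp))

@[simp] lemma splitEquiv_apply (a : M × L) : c.splitEquiv a = c.i a.1 + c.sec a.2 := rfl

noncomputable def cochain : (L →ₗ[K] L →ₗ[K] L →ₗ[K] M) × (L →ₗ[K] M) :=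
  (c.retr.compTri c.str.br c.sec, c.retr ∘ₗ c.φE ∘ₗ c.sec)

lemma splitEquiv_twistedBr (a b d : M × L) :
    c.splitEquiv (twistedBr A c.cochain.1 a b d)
      = c.str.br (c.splitEquiv a) (c.splitEquiv b) (c.splitEquiv d) := by
  simp [cochain, i_retr, c.morph]

lemma splitEquiv_twistedDer (a : M × L) :
    c.splitEquiv (twistedDer φL φM c.cochain.2 a) = c.φE (c.splitEquiv a) := by
  simp only [cochain, twistedDer_apply, LinearMap.coe_comp, Function.comp_apply, splitEquiv_apply,
    map_add, i_retr, c.compat_p, p_sec, c.compat_i]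
  abel

lemma isTwoCocycle_cochain : IsTwoCocycle A φL φM c.cochain :=
  isTwoCocycle_of_isDer_twistedDer A φL φM
    (c.str.ofIntertwining c.splitEquiv _ c.splitEquiv_twistedBr) rfl
    (ThreeLieAlgebra.isDer_ofIntertwining _ _ _ _ c.der c.splitEquiv_twistedDer)

noncomputable def cocycle :
    {pc : (L →ₗ[K] L →ₗ[K] L →ₗ[K] M) × (L →ₗ[K] M) // IsTwoCocycle A φL φM pc} :=
  ⟨c.cochain, c.isTwoCocycle_cochain⟩

lemma extIso_ofCocycle_cocycle (hφL : IsDer A φL) : ExtIso (ofCocycle hφL c.cocycle) c :=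
  ⟨c.splitEquiv, c.splitEquiv_twistedBr, c.splitEquiv_twistedDer,
    fun m => show c.i m + c.sec 0 = c.i m by simp,
    fun e => show c.p (c.i e.1 + c.sec e.2) = e.2 by simp⟩

end CentExt

namespace ExtIso

variable {K L M : Type} [Field K] [AddCommGroup L] [Module K L] [AddCommGroup M] [Module K M]
    {A : ThreeLieAlgebra K L} {φL : L →ₗ[K] L} {φM : M →ₗ[K] M}

lemma symm {c c' : CentExt K L M A φL φM} (h : ExtIso c c') : ExtIso c' c := by
  obtain ⟨η, hbr, hφ, hi, hp⟩ := h
  refine ⟨η.symm, fun a b d => η.injective ?_, fun e => η.injective ?_,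
    fun m => η.symm_apply_eq.2 (hi m).symm, fun e => by rw [← hp, η.apply_symm_apply]⟩
  · simp only [hbr, LinearEquiv.apply_symm_apply]
  · simp only [hφ, LinearEquiv.apply_symm_apply]

lemma trans {c c' c'' : CentExt K L M A φL φM} (h : ExtIso c c') (h' : ExtIso c' c'') :
    ExtIso c c'' := by
  obtain ⟨η, hbr, hφ, hi, hp⟩ := h
  obtain ⟨η', hbr', hφ', hi', hp'⟩ := h'
  exact ⟨η.trans η', by simp [hbr, hbr'], by simp [hφ, hφ'], by simp [hi, hi'], by simp [hp, hp']⟩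

end ExtIso

section Shear

variable {K L M : Type} [Field K] [AddCommGroup L] [Module K L] [AddCommGroup M] [Module K M]
    {A : ThreeLieAlgebra K L} {φL : L →ₗ[K] L} {φM : M →ₗ[K] M}

def shear (u : L →ₗ[K] M) : (M × L) ≃ₗ[K] (M × L) :=
  LinearEquiv.ofLinearMap (LinearMap.id + LinearMap.inl K M L ∘ₗ u ∘ₗ LinearMap.snd K M L)
    (LinearMap.id - LinearMap.inl K M L ∘ₗ u ∘ₗ LinearMap.snd K M L)
    (LinearMap.ext fun _ => by simp) (LinearMap.ext fun _ => by simp)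

@[simp] lemma shear_apply (u : L →ₗ[K] M) (a : M × L) : shear u a = (a.1 + u a.2, a.2) := by
  simp [shear, Prod.ext_iff]

lemma eq_shear {η : (M × L) ≃ₗ[K] (M × L)} (hi : ∀ m, η (m, 0) = (m, 0))
    (hp : ∀ e, (η e).2 = e.2) (e : M × L) :
    η e = shear (LinearMap.fst K M L ∘ₗ η.toLinearMap ∘ₗ LinearMap.inr K M L) e := by
  have he : e = (e.1, 0) + (0, e.2) := by simp
  rw [he, map_add, hi, shear_apply]
  exact Prod.ext (by simp) (by simp [hp])

lemma shear_twistedBr_iff (u : L →ₗ[K] M) (ω ω' : L →ₗ[K] L →ₗ[K] L →ₗ[K] M) :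
    (∀ a b d, shear u (twistedBr A ω a b d)
      = twistedBr A ω' (shear u a) (shear u b) (shear u d)) ↔
    ∀ x y z, ω x y z - ω' x y z = -u (A.br x y z) := by
  constructor
  · intro h x y z
    have h1 := congrArg Prod.fst (h (0, x) (0, y) (0, z))
    simp only [shear_apply, twistedBr_apply] at h1
    rw [← h1]
    abel
  · intro h a b d
    simp only [shear_apply, twistedBr_apply, sub_eq_iff_eq_add.mp (h a.2 b.2 d.2)]
    abel_nf

lemma shear_twistedDer_iff (u : L →ₗ[K] M) (ψ ψ' : L →ₗ[K] M) :
    (∀ a, shear u (twistedDer φL φM ψ a) = twistedDer φL φM ψ' (shear u a)) ↔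
    ∀ x, ψ x - ψ' x = φM (u x) - u (φL x) := by
  constructor
  · intro h x
    have h1 := congrArg Prod.fst (h (0, x))
    simp only [shear_apply, twistedDer_apply, map_zero, zero_add] at h1
    rw [sub_eq_sub_iff_add_eq_add, h1]
  · intro h a
    simp only [shear_apply, twistedDer_apply, map_add, sub_eq_iff_eq_add.mp (h a.2)]
    abel_nf

lemma extIso_ofCocycle_of_cohomRel (hφL : IsDer A φL)
    {a b : {pc : (L →ₗ[K] L →ₗ[K] L →ₗ[K] M) × (L →ₗ[K] M) // IsTwoCocycle A φL φM pc}}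
    (h : CohomRel A φL φM a b) : ExtIso (CentExt.ofCocycle hφL a) (CentExt.ofCocycle hφL b) := by
  obtain ⟨u, hbr, hφ⟩ := h
  exact ⟨shear u, (shear_twistedBr_iff u _ _).2 hbr, (shear_twistedDer_iff u _ _).2 hφ,
    fun m => (shear_apply u (m, 0)).trans (by rw [map_zero, add_zero]; rfl),
    fun e => (congrArg Prod.snd (shear_apply u e) :)⟩

lemma cohomRel_of_extIso_ofCocycle (hφL : IsDer A φL)
    {a b : {pc : (L →ₗ[K] L →ₗ[K] L →ₗ[K] M) × (L →ₗ[K] M) // IsTwoCocycle A φL φM pc}}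
    (h : ExtIso (CentExt.ofCocycle hφL a) (CentExt.ofCocycle hφL b)) : CohomRel A φL φM a b := by
  obtain ⟨η, hbr, hφ, hi, hp⟩ := h
  have hη : ⇑η = shear _ := funext (eq_shear (η := η) hi hp)
  rw [hη] at hbr hφ
  exact ⟨_, (shear_twistedBr_iff _ _ _).1 hbr, (shear_twistedDer_iff _ _ _).1 hφ⟩

end Shear

/-- isomorphism classes of central extensions of a 3-LieDer pair
`(L, φL)` by an abelian 3-LieDer pair `(M, φM)` are in bijection with the second
cohomology group `H²_{3-LieDer}(L, M)` with trivial coefficients. -/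
theorem central_extensions_classified_by_H2
    (K L M : Type) [Field K] [AddCommGroup L] [Module K L]
    [AddCommGroup M] [Module K M]
    (A : ThreeLieAlgebra K L) (φL : L →ₗ[K] L) (hφL : IsDer A φL)
    (φM : M →ₗ[K] M) :
    Nonempty (Quot (ExtIso (A := A) (φL := φL) (φM := φM))
      ≃ Quot (CohomRel A φL φM)) := by
  have hsplit (c : CentExt K L M A φL φM) := c.extIso_ofCocycle_cocycle hφL
  refine ⟨{
    toFun := Quot.lift (Quot.mk _ ∘ CentExt.cocycle) fun c c' h => Quot.sound <|
      cohomRel_of_extIso_ofCocycle hφL ((hsplit c).trans (h.trans (hsplit c').symm))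
    invFun := Quot.lift (Quot.mk _ ∘ CentExt.ofCocycle hφL) fun a b h => Quot.sound <|
      extIso_ofCocycle_of_cohomRel hφL h
    left_inv := Quot.ind fun c => Quot.sound (hsplit c)
    right_inv := Quot.ind fun a => Quot.sound <|
      cohomRel_of_extIso_ofCocycle hφL (hsplit (CentExt.ofCocycle hφL a)) }⟩
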